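/- arXiv:0908.2525 — 2 statements merged into one kernel-verified Lean document; each statement's English description precedes it below -/
import Mathlib

section
/- Fix t ∈ ℝ and set h s = ⟪γ s, n s⟫ and Δ = det(n t, deriv n t, iteratedDeriv 2 n t). Assume Δ ≠ 0 and let x ∈ E be the unique point satisfying ⟪x, n t⟫ = h t, ⟪x, deriv n t⟫ = deriv h t, ⟪x, iteratedDeriv 2 n t⟫ = iteratedDeriv 2 h t. Then the distance from the boundary point γ t to the corresponding point x of the singular locus of the boundary-envelope is ‖x − γ t‖ = |κ2 t| · Real.sqrt ((κ2 t)^2 + (κ3 t)^2) / |κ2 t · (deriv κ3 t + κ1 t · κ2 t) + κ3 t · (κ1 t · κ3 t − deriv κ2 t)|. -/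
open scoped RealInnerProductSpace

noncomputable def cross3 (u v : EuclideanSpace ℝ (Fin 3)) : EuclideanSpace ℝ (Fin 3) :=
  (WithLp.equiv 2 (Fin 3 → ℝ)).symm
    ![u 1 * v 2 - u 2 * v 1, u 2 * v 0 - u 0 * v 2, u 0 * v 1 - u 1 * v 0]

noncomputable def det3 (u v w : EuclideanSpace ℝ (Fin 3)) : ℝ :=
  Matrix.det (Matrix.of (fun i j => ![u, v, w] j i))

/-! Put y = x - γ t. Since ⟪γ', n⟫ = 0, the support function h = ⟪γ, n⟫ has h' = ⟪γ, n'⟫ and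
h'' = ⟪γ, n''⟫ + ⟪γ', n'⟫, so the defining equations of x say ⟪y, n⟫ = 0, ⟪y, n'⟫ = 0 and
⟪y, n''⟫ = ⟪e1, n'⟫ = -κ2. Expanding n' and n'' in the Darboux frame turns the last two into a
2×2 linear system for the frame coordinates (⟪y, e1⟫, ⟪y, e2⟫), whose determinant D is the
denominator of the formula. As Δ = D · det(e1, e2, e3), D ≠ 0, and Cramer's rule gives
(⟪y, e1⟫, ⟪y, e2⟫) = (-κ2 κ3, κ2²) / D. -/

theorem Orthonormal.sum_sq_inner_eq_norm_sq {ι E : Type*} [Fintype ι] [NormedAddCommGroup E]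
    [InnerProductSpace ℝ E] [FiniteDimensional ℝ E] {v : ι → E} (hv : Orthonormal ℝ v)
    (hcard : Fintype.card ι = Module.finrank ℝ E) (x : E) :
    ∑ i, ⟪x, v i⟫ ^ 2 = ‖x‖ ^ 2 := by
  have hspan := (hv.linearIndependent.span_eq_top_of_card_eq_finrank' hcard).ge
  simpa using (OrthonormalBasis.mk hv hspan).sum_sq_inner_left x

theorem norm_eq_sqrt_of_orthonormal_of_inner_eq_zero {E : Type*} [NormedAddCommGroup E]
    [InnerProductSpace ℝ E] [FiniteDimensional ℝ E] (hE : Module.finrank ℝ E = 3)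
    {u v w y : E} (huvw : Orthonormal ℝ ![u, v, w]) (hy : ⟪y, w⟫ = 0) :
    ‖y‖ = √(⟪y, u⟫ ^ 2 + ⟪y, v⟫ ^ 2) := by
  have hsum := huvw.sum_sq_inner_eq_norm_sq (by simp [hE]) y
  simp only [Fin.sum_univ_three, Matrix.cons_val_zero, Matrix.cons_val_one, Matrix.cons_val_two,
    Matrix.head_cons, Matrix.tail_cons, hy] at hsum
  rw [← Real.sqrt_sq (norm_nonneg y), ← hsum]
  ring_nf

theorem det3_darboux_combination (u v w : EuclideanSpace ℝ (Fin 3)) (k l p q r : ℝ) :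
    det3 w (-k • u - l • v) (p • u + q • v + r • w) = (l * p - k * q) * det3 u v w := by
  simp only [det3, Matrix.det_fin_three, Matrix.of_apply, Matrix.cons_val_zero,
    Matrix.cons_val_one, Matrix.head_cons, Matrix.cons_val_two, Matrix.tail_cons,
    PiLp.add_apply, PiLp.sub_apply, PiLp.smul_apply, smul_eq_mul]
  ring

theorem sqrt_sq_add_sq_of_linear_system {a b k l p q : ℝ} (h₁ : -k * a - l * b = 0)
    (h₂ : p * a + q * b = -k) (hD : l * p - k * q ≠ 0) :
    √(a ^ 2 + b ^ 2) = |k| * √(k ^ 2 + l ^ 2) / |l * p - k * q| := by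
  have ha : a * (l * p - k * q) = -(k * l) := by linear_combination l * h₂ + q * h₁
  have hb : b * (l * p - k * q) = k ^ 2 := by linear_combination -k * h₂ - p * h₁
  have hsum : a ^ 2 + b ^ 2 = (k * √(k ^ 2 + l ^ 2) / (l * p - k * q)) ^ 2 := by
    rw [div_pow, mul_pow, Real.sq_sqrt (by positivity), eq_div_iff (pow_ne_zero 2 hD)]
    linear_combination (a * (l * p - k * q) - k * l) * ha + (b * (l * p - k * q) + k ^ 2) * hb
  rw [hsum, Real.sqrt_sq_eq_abs, abs_div, abs_mul, abs_of_nonneg (Real.sqrt_nonneg _)]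

section SupportFunction

variable {F : Type*} [NormedAddCommGroup F] [InnerProductSpace ℝ F] {γ n : ℝ → F}

theorem deriv_inner_of_inner_deriv_eq_zero (hγ : Differentiable ℝ γ) (hn : Differentiable ℝ n)
    (h : ∀ s, ⟪deriv γ s, n s⟫ = 0) :
    deriv (fun s => ⟪γ s, n s⟫) = fun s => ⟪γ s, deriv n s⟫ := by
  funext s
  rw [deriv_inner_apply ℝ (hγ s) (hn s), h, add_zero]

theorem iteratedDeriv_two_inner_of_inner_deriv_eq_zero (hγ : ContDiff ℝ 2 γ) (hn : ContDiff ℝ 2 n)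
    (h : ∀ s, ⟪deriv γ s, n s⟫ = 0) (t : ℝ) :
    iteratedDeriv 2 (fun s => ⟪γ s, n s⟫) t
      = ⟪γ t, iteratedDeriv 2 n t⟫ + ⟪deriv γ t, deriv n t⟫ := by
  have hn' : Differentiable ℝ (deriv n) := by
    simpa using hn.differentiable_iteratedDeriv 1 (by norm_num)
  rw [iteratedDeriv_succ, iteratedDeriv_one, iteratedDeriv_succ, iteratedDeriv_one,
    deriv_inner_of_inner_deriv_eq_zero (hγ.differentiable (by norm_num))
      (hn.differentiable (by norm_num)) h,
    deriv_inner_apply ℝ ((hγ.differentiable (by norm_num)) t) (hn' t)]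

end SupportFunction

theorem iteratedDeriv_two_eq_of_darboux {E : Type*} [NormedAddCommGroup E] [NormedSpace ℝ E]
    {e1 e2 e3 : ℝ → E} {κ1 κ2 κ3 : ℝ → ℝ} {t : ℝ}
    (he1 : DifferentiableAt ℝ e1 t) (he2 : DifferentiableAt ℝ e2 t)
    (hκ2 : DifferentiableAt ℝ κ2 t) (hκ3 : DifferentiableAt ℝ κ3 t)
    (hE1 : deriv e1 t = κ1 t • e2 t + κ2 t • e3 t)
    (hE2 : deriv e2 t = (-(κ1 t)) • e1 t + κ3 t • e3 t)
    (hE3 : ∀ s, deriv e3 s = (-(κ2 s)) • e1 s - κ3 s • e2 s) :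
    iteratedDeriv 2 e3 t = (κ1 t * κ3 t - deriv κ2 t) • e1 t
      + (-(κ1 t * κ2 t) - deriv κ3 t) • e2 t + (-((κ2 t) ^ 2 + (κ3 t) ^ 2)) • e3 t := by
  have hd : HasDerivAt (deriv e3) ((-(κ2 t)) • deriv e1 t + (-(deriv κ2 t)) • e1 t
      - (κ3 t • deriv e2 t + deriv κ3 t • e2 t)) t := by
    rw [funext hE3]
    exact (hκ2.hasDerivAt.neg.smul he1.hasDerivAt).sub (hκ3.hasDerivAt.smul he2.hasDerivAt)
  rw [iteratedDeriv_succ, iteratedDeriv_one, hd.deriv, hE1, hE2]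
  module

theorem stmt10_general
    (γ e1 e2 e3 : ℝ → EuclideanSpace ℝ (Fin 3)) (κ1 κ2 κ3 : ℝ → ℝ)
    (hγ : ContDiff ℝ (⊤ : ℕ∞) γ)
    (he1s : ContDiff ℝ (⊤ : ℕ∞) e1) (he2s : ContDiff ℝ (⊤ : ℕ∞) e2)
    (he3s : ContDiff ℝ (⊤ : ℕ∞) e3)
    (hκ2s : ContDiff ℝ (⊤ : ℕ∞) κ2)
    (hκ3s : ContDiff ℝ (⊤ : ℕ∞) κ3)
    (he1 : e1 = deriv γ)
    (hON : ∀ t, Orthonormal ℝ ![e1 t, e2 t, e3 t])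
    (hE1 : ∀ t, deriv e1 t = κ1 t • e2 t + κ2 t • e3 t)
    (hE2 : ∀ t, deriv e2 t = (-(κ1 t)) • e1 t + κ3 t • e3 t)
    (hE3 : ∀ t, deriv e3 t = (-(κ2 t)) • e1 t - κ3 t • e2 t)
    (t : ℝ)
    (hΔ : det3 (e3 t) (deriv e3 t) (iteratedDeriv 2 e3 t) ≠ 0)
    (x : EuclideanSpace ℝ (Fin 3))
    (hx1 : ⟪x, e3 t⟫ = ⟪γ t, e3 t⟫)
    (hx2 : ⟪x, deriv e3 t⟫ = deriv (fun s => ⟪γ s, e3 s⟫) t)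
    (hx3 : ⟪x, iteratedDeriv 2 e3 t⟫ = iteratedDeriv 2 (fun s => ⟪γ s, e3 s⟫) t) :
    ‖x - γ t‖ = |κ2 t| * Real.sqrt ((κ2 t)^2 + (κ3 t)^2)
      / |κ2 t * (deriv κ3 t + κ1 t * κ2 t) + κ3 t * (κ1 t * κ3 t - deriv κ2 t)| := by
  have htan s : ⟪deriv γ s, e3 s⟫ = 0 :=
    he1 ▸ (hON s).inner_eq_zero (by decide : (0 : Fin 3) ≠ 2)
  have hγ2 : ContDiff ℝ 2 γ := hγ.of_le (WithTop.coe_le_coe.mpr le_top)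
  have he32 : ContDiff ℝ 2 e3 := he3s.of_le (WithTop.coe_le_coe.mpr le_top)
  have hn'' := iteratedDeriv_two_eq_of_darboux (he1s.differentiable (by simp) t)
    (he2s.differentiable (by simp) t) (hκ2s.differentiable (by simp) t)
    (hκ3s.differentiable (by simp) t) (hE1 t) (hE2 t) hE3
  rw [hE3, hn'', det3_darboux_combination] at hΔ
  have hy' : ⟪x - γ t, deriv e3 t⟫ = 0 := by
    rw [inner_sub_left, hx2, deriv_inner_of_inner_deriv_eq_zero (hγ2.differentiable (by simp))
      (he32.differentiable (by simp)) htan, sub_self]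
  have hy'' : ⟪x - γ t, iteratedDeriv 2 e3 t⟫ = -κ2 t := by
    have h11 : ⟪e1 t, e1 t⟫ = 1 := by
      rw [real_inner_self_eq_norm_sq, show ‖e1 t‖ = 1 from (hON t).1 0, one_pow]
    have h12 : ⟪e1 t, e2 t⟫ = 0 := (hON t).inner_eq_zero (by decide : (0 : Fin 3) ≠ 1)
    rw [inner_sub_left, hx3, iteratedDeriv_two_inner_of_inner_deriv_eq_zero hγ2 he32 htan, ← he1,
      hE3, inner_sub_right, real_inner_smul_right, real_inner_smul_right, h11, h12]
    ring
  have hy3 : ⟪x - γ t, e3 t⟫ = 0 := by rw [inner_sub_left, hx1, sub_self]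
  rw [norm_eq_sqrt_of_orthonormal_of_inner_eq_zero (by simp) (hON t) hy3,
    show κ2 t * (deriv κ3 t + κ1 t * κ2 t) + κ3 t * (κ1 t * κ3 t - deriv κ2 t)
      = κ3 t * (κ1 t * κ3 t - deriv κ2 t) - κ2 t * (-(κ1 t * κ2 t) - deriv κ3 t) by ring]
  refine sqrt_sq_add_sq_of_linear_system ?_ ?_ (left_ne_zero_of_mul hΔ)
  · simpa [hE3, inner_sub_right, real_inner_smul_right] using hy'
  · simpa [hn'', inner_add_right, real_inner_smul_right, hy3] using hy''

theorem stmt10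
    (γ e1 e2 e3 : ℝ → EuclideanSpace ℝ (Fin 3)) (κ1 κ2 κ3 : ℝ → ℝ)
    (hγ : ContDiff ℝ (⊤ : ℕ∞) γ)
    (he1s : ContDiff ℝ (⊤ : ℕ∞) e1) (he2s : ContDiff ℝ (⊤ : ℕ∞) e2)
    (he3s : ContDiff ℝ (⊤ : ℕ∞) e3)
    (hκ1s : ContDiff ℝ (⊤ : ℕ∞) κ1) (hκ2s : ContDiff ℝ (⊤ : ℕ∞) κ2)
    (hκ3s : ContDiff ℝ (⊤ : ℕ∞) κ3)
    (he1 : e1 = deriv γ)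
    (hON : ∀ t, Orthonormal ℝ ![e1 t, e2 t, e3 t])
    (hor : ∀ t, e3 t = cross3 (e1 t) (e2 t))
    (hE1 : ∀ t, deriv e1 t = κ1 t • e2 t + κ2 t • e3 t)
    (hE2 : ∀ t, deriv e2 t = (-(κ1 t)) • e1 t + κ3 t • e3 t)
    (hE3 : ∀ t, deriv e3 t = (-(κ2 t)) • e1 t - κ3 t • e2 t)
    (t : ℝ)
    (hΔ : det3 (e3 t) (deriv e3 t) (iteratedDeriv 2 e3 t) ≠ 0)
    (x : EuclideanSpace ℝ (Fin 3))
    (hx1 : ⟪x, e3 t⟫ = ⟪γ t, e3 t⟫)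
    (hx2 : ⟪x, deriv e3 t⟫ = deriv (fun s => ⟪γ s, e3 s⟫) t)
    (hx3 : ⟪x, iteratedDeriv 2 e3 t⟫ = iteratedDeriv 2 (fun s => ⟪γ s, e3 s⟫) t) :
    ‖x - γ t‖ = |κ2 t| * Real.sqrt ((κ2 t)^2 + (κ3 t)^2)
      / |κ2 t * (deriv κ3 t + κ1 t * κ2 t) + κ3 t * (κ1 t * κ3 t - deriv κ2 t)| :=
  stmt10_general γ e1 e2 e3 κ1 κ2 κ3 hγ he1s he2s he3s hκ2s hκ3s he1 hON hE1 hE2 hE3 t hΔ x hx1 hx2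
    hx3
end

section
/- For every t ∈ ℝ, the determinant of the 4×4 matrix with columns Γ t, deriv Γ t, iteratedDeriv 2 Γ t, iteratedDeriv 3 Γ t equals the negative of the expression κ1²κ3(κ2² + κ3²) + κ2(κ2² + κ3²)κ1' − 3κ1κ3²κ2' + 3κ1κ2κ3κ3' + 2κ3(κ2')² − 2κ2κ2'κ3' − κ2κ3κ2'' + κ2²κ3'' (all κ's, κ' = deriv κ, κ'' = iteratedDeriv 2 κ evaluated at t). In particular this determinant vanishes at t if and only if the displayed expression vanishes at t (condition (II) for a swallowtail-tangent point). -/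
open scoped RealInnerProductSpace

noncomputable def det4 (u v w x : Fin 4 → ℝ) : ℝ :=
  Matrix.det (Matrix.of (fun i j => ![u, v, w, x] j i))

/-!
The homogeneous coordinates `Γ = (n, -⟪γ, n⟫)` and all their derivatives have the shape
`(V, s - ⟪γ, V⟫)` with `V` a vector field along `γ` (the term `⟪γ', V⟫ = ⟪e1, V⟫` produced by
differentiation is absorbed into `s`). Writing `V = a e1 + b e2 + c e3`, the vector
`(V, s - ⟪γ, V⟫)` is the image of `(a, b, c, s)` under a fixed matrix whose determinant is
`det (e1, e2, e3) = 1`. So the determinant of `Γ, Γ', Γ'', Γ'''` equals the determinant of their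
frame coordinates, which the structure equations compute as explicit polynomials in the `κ`'s.
-/

open Matrix

local notation "E³" => EuclideanSpace ℝ (Fin 3)

theorem det_fin_four {R : Type*} [CommRing R] (A : Matrix (Fin 4) (Fin 4) R) :
    A.det =
      A 0 0 * (A 1 1 * (A 2 2 * A 3 3 - A 2 3 * A 3 2) - A 1 2 * (A 2 1 * A 3 3 - A 2 3 * A 3 1)
        + A 1 3 * (A 2 1 * A 3 2 - A 2 2 * A 3 1))
      - A 0 1 * (A 1 0 * (A 2 2 * A 3 3 - A 2 3 * A 3 2) - A 1 2 * (A 2 0 * A 3 3 - A 2 3 * A 3 0)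
        + A 1 3 * (A 2 0 * A 3 2 - A 2 2 * A 3 0))
      + A 0 2 * (A 1 0 * (A 2 1 * A 3 3 - A 2 3 * A 3 1) - A 1 1 * (A 2 0 * A 3 3 - A 2 3 * A 3 0)
        + A 1 3 * (A 2 0 * A 3 1 - A 2 1 * A 3 0))
      - A 0 3 * (A 1 0 * (A 2 1 * A 3 2 - A 2 2 * A 3 1) - A 1 1 * (A 2 0 * A 3 2 - A 2 2 * A 3 0)
        + A 1 2 * (A 2 0 * A 3 1 - A 2 1 * A 3 0)) := by
  simp only [det_succ_row_zero, Fin.sum_univ_succ, Fin.succAbove, det_unique, submatrix_apply,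
    Fin.default_eq_zero, Fin.reduceSucc, Fin.reduceCastSucc, Fin.coe_ofNat_eq_mod, Fin.reduceLT,
    ↓reduceIte]
  ring

theorem det4_mulVec (A : Matrix (Fin 4) (Fin 4) ℝ) (u v w x : Fin 4 → ℝ) :
    det4 (A *ᵥ u) (A *ᵥ v) (A *ᵥ w) (A *ᵥ x) = A.det * det4 u v w x := by
  rw [det4, det4, ← det_mul]
  congr 1
  ext i j
  fin_cases j <;> simp [mul_apply, mulVec, dotProduct]

theorem det3_cross3 (u v : E³) : det3 u v (cross3 u v) = ‖u‖ ^ 2 * ‖v‖ ^ 2 - ⟪u, v⟫ ^ 2 := by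
  simp only [det3, cross3, WithLp.equiv_symm_apply, det_fin_three, of_apply, cons_val_zero,
    cons_val_one, cons_val, EuclideanSpace.norm_sq_eq, Real.norm_eq_abs, sq_abs,
    Fin.sum_univ_three, PiLp.inner_apply, RCLike.inner_apply, Real.ringHom_apply, Fin.isValue]
  ring

theorem det3_eq_one_of_orthonormal {u v w : E³} (h : Orthonormal ℝ ![u, v, w])
    (hw : w = cross3 u v) : det3 u v w = 1 := by
  have hu : ‖u‖ = 1 := by simpa using h.1 0
  have hv : ‖v‖ = 1 := by simpa using h.1 1
  have huv : ⟪u, v⟫ = 0 := by simpa using h.2 (show (0 : Fin 3) ≠ 1 by decide)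
  rw [hw, det3_cross3, hu, hv, huv]
  norm_num

theorem ContDiff.hasDerivAt_deriv {𝕜 F : Type*} [NontriviallyNormedField 𝕜] [NormedAddCommGroup F]
    [NormedSpace 𝕜 F] {f : 𝕜 → F} (h : ContDiff 𝕜 2 f) (t : 𝕜) :
    HasDerivAt (deriv f) (iteratedDeriv 2 f t) t := by
  rw [iteratedDeriv_succ, iteratedDeriv_one]
  exact (h.differentiable_deriv_two t).hasDerivAt

noncomputable def inFrame (e1 e2 e3 : ℝ → E³) (a b c : ℝ → ℝ) (t : ℝ) : E³ :=
  a t • e1 t + b t • e2 t + c t • e3 t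

theorem inner_inFrame {e1 e2 e3 : ℝ → E³} {t : ℝ} (h : Orthonormal ℝ ![e1 t, e2 t, e3 t])
    (a b c : ℝ → ℝ) : ⟪e1 t, inFrame e1 e2 e3 a b c t⟫ = a t := by
  have h1 : ‖e1 t‖ = 1 := by simpa using h.1 0
  have h12 : ⟪e1 t, e2 t⟫ = 0 := by simpa using h.2 (show (0 : Fin 3) ≠ 1 by decide)
  have h13 : ⟪e1 t, e3 t⟫ = 0 := by simpa using h.2 (show (0 : Fin 3) ≠ 2 by decide)
  simp [inFrame, inner_add_right, inner_smul_right, h1, h12, h13]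

theorem hasDerivAt_inFrame {e1 e2 e3 : ℝ → E³} {κ1 κ2 κ3 a b c a' b' c' : ℝ → ℝ} {t da db dc : ℝ}
    (hE1 : HasDerivAt e1 (κ1 t • e2 t + κ2 t • e3 t) t)
    (hE2 : HasDerivAt e2 ((-(κ1 t)) • e1 t + κ3 t • e3 t) t)
    (hE3 : HasDerivAt e3 ((-(κ2 t)) • e1 t - κ3 t • e2 t) t)
    (ha : HasDerivAt a da t) (hb : HasDerivAt b db t) (hc : HasDerivAt c dc t)
    (ha' : a' t = da - κ1 t * b t - κ2 t * c t) (hb' : b' t = db + κ1 t * a t - κ3 t * c t)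
    (hc' : c' t = dc + κ2 t * a t + κ3 t * b t) :
    HasDerivAt (inFrame e1 e2 e3 a b c) (inFrame e1 e2 e3 a' b' c' t) t := by
  refine (((ha.smul hE1).add (hb.smul hE2)).add (hc.smul hE3)).congr_deriv ?_
  rw [inFrame, ha', hb', hc']
  module

noncomputable def dualLift (γ V : ℝ → E³) (s : ℝ → ℝ) (t : ℝ) : Fin 4 → ℝ :=
  ![V t 0, V t 1, V t 2, s t - ⟪γ t, V t⟫]

noncomputable def frameMatrix (p e1 e2 e3 : E³) : Matrix (Fin 4) (Fin 4) ℝ :=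
  Matrix.of ![![e1 0, e2 0, e3 0, 0], ![e1 1, e2 1, e3 1, 0], ![e1 2, e2 2, e3 2, 0],
    ![-⟪p, e1⟫, -⟪p, e2⟫, -⟪p, e3⟫, 1]]

theorem det_frameMatrix (p e1 e2 e3 : E³) : (frameMatrix p e1 e2 e3).det = det3 e1 e2 e3 := by
  simp only [frameMatrix, det3, det_fin_four, det_fin_three, of_apply, cons_val', cons_val_zero,
    cons_val_fin_one, cons_val_one, cons_val, Fin.isValue]
  ring

theorem dualLift_inFrame (γ e1 e2 e3 : ℝ → E³) (a b c s : ℝ → ℝ) (t : ℝ) :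
    dualLift γ (inFrame e1 e2 e3 a b c) s t
      = frameMatrix (γ t) (e1 t) (e2 t) (e3 t) *ᵥ ![a t, b t, c t, s t] := by
  ext i
  fin_cases i <;>
    simp only [dualLift, inFrame, frameMatrix, mulVec, dotProduct, Fin.sum_univ_four, of_apply,
      cons_val', cons_val_fin_one, cons_val_zero, cons_val_one, cons_val, Fin.zero_eta, Fin.mk_one,
      Fin.reduceFinMk, Fin.isValue, PiLp.add_apply, PiLp.smul_apply, smul_eq_mul, inner_add_right,
      inner_smul_right] <;> ring

theorem hasDerivAt_dualLift {γ V : ℝ → E³} {s : ℝ → ℝ} {t : ℝ} {v V' : E³} {ds : ℝ}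
    (hγ : HasDerivAt γ v t) (hV : HasDerivAt V V' t) (hs : HasDerivAt s ds t) :
    HasDerivAt (dualLift γ V s) ![V' 0, V' 1, V' 2, ds - ⟪v, V t⟫ - ⟪γ t, V'⟫] t := by
  have hV_apply (i : Fin 3) : HasDerivAt (fun t => V t i) (V' i) t :=
    (PiLp.hasFDerivAt_apply 2 (V t) i).comp_hasDerivAt t hV
  have hS : HasDerivAt (fun t => s t - ⟪γ t, V t⟫) (ds - ⟪v, V t⟫ - ⟪γ t, V'⟫) t :=
    (hs.sub (hγ.inner ℝ hV)).congr_deriv (by ring)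
  refine hasDerivAt_pi.2 fun i => ?_
  fin_cases i
  exacts [hV_apply 0, hV_apply 1, hV_apply 2, hS]

theorem deriv_dualLift {γ V : ℝ → E³} {s s' : ℝ → ℝ} {v V' : ℝ → E³} {ds : ℝ → ℝ}
    (hγ : ∀ t, HasDerivAt γ (v t) t) (hV : ∀ t, HasDerivAt V (V' t) t)
    (hs : ∀ t, HasDerivAt s (ds t) t) (hs' : ∀ t, s' t = ds t - ⟪v t, V t⟫) :
    deriv (dualLift γ V s) = dualLift γ V' s' := by
  funext t
  rw [(hasDerivAt_dualLift (hγ t) (hV t) (hs t)).deriv, dualLift, hs']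

section DarbouxFrame

variable {γ e1 e2 e3 : ℝ → E³} {κ1 κ2 κ3 : ℝ → ℝ}

theorem hasDerivAt_normal_inFrame
    (hE1 : ∀ t, HasDerivAt e1 (κ1 t • e2 t + κ2 t • e3 t) t)
    (hE2 : ∀ t, HasDerivAt e2 ((-(κ1 t)) • e1 t + κ3 t • e3 t) t)
    (hE3 : ∀ t, HasDerivAt e3 ((-(κ2 t)) • e1 t - κ3 t • e2 t) t)
    (hκ1 : Differentiable ℝ κ1) (hκ2 : ContDiff ℝ 2 κ2) (hκ3 : ContDiff ℝ 2 κ3) :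
    (∀ t, HasDerivAt e3
      (inFrame e1 e2 e3 (fun t => -κ2 t) (fun t => -κ3 t) (fun _ => 0) t) t) ∧
    (∀ t, HasDerivAt (inFrame e1 e2 e3 (fun t => -κ2 t) (fun t => -κ3 t) (fun _ => 0))
      (inFrame e1 e2 e3 (fun t => κ1 t * κ3 t - deriv κ2 t) (fun t => -(κ1 t * κ2 t) - deriv κ3 t)
        (fun t => -(κ2 t ^ 2 + κ3 t ^ 2)) t) t) ∧
    (∀ t, HasDerivAt (inFrame e1 e2 e3 (fun t => κ1 t * κ3 t - deriv κ2 t)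
        (fun t => -(κ1 t * κ2 t) - deriv κ3 t) (fun t => -(κ2 t ^ 2 + κ3 t ^ 2)))
      (inFrame e1 e2 e3
        (fun t => deriv κ1 t * κ3 t + κ1 t * deriv κ3 t - iteratedDeriv 2 κ2 t
          + κ1 t * (κ1 t * κ2 t + deriv κ3 t) + κ2 t * (κ2 t ^ 2 + κ3 t ^ 2))
        (fun t => -(deriv κ1 t * κ2 t + κ1 t * deriv κ2 t) - iteratedDeriv 2 κ3 t
          + κ1 t * (κ1 t * κ3 t - deriv κ2 t) + κ3 t * (κ2 t ^ 2 + κ3 t ^ 2))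
        (fun t => -3 * κ2 t * deriv κ2 t - 3 * κ3 t * deriv κ3 t) t) t) := by
  have hk1 t : HasDerivAt κ1 (deriv κ1 t) t := (hκ1 t).hasDerivAt
  have hk2 t : HasDerivAt κ2 (deriv κ2 t) t := (hκ2.differentiable (by norm_num) t).hasDerivAt
  have hk3 t : HasDerivAt κ3 (deriv κ3 t) t := (hκ3.differentiable (by norm_num) t).hasDerivAt
  refine ⟨fun t => (hE3 t).congr_deriv (by simp [inFrame, sub_eq_add_neg]),
    fun t => ?_, fun t => ?_⟩
  · exact hasDerivAt_inFrame (hE1 t) (hE2 t) (hE3 t) (hk2 t).neg (hk3 t).neg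
      (hasDerivAt_const t 0) (by ring) (by ring) (by ring)
  · exact hasDerivAt_inFrame (hE1 t) (hE2 t) (hE3 t)
      (((hk1 t).mul (hk3 t)).sub (hκ2.hasDerivAt_deriv t))
      (((hk1 t).mul (hk2 t)).neg.sub (hκ3.hasDerivAt_deriv t))
      (((hk2 t).pow 2).add ((hk3 t).pow 2)).neg (by ring) (by ring) (by ring)

theorem det4_iteratedDeriv_dualLift_normal (hγ : ∀ t, HasDerivAt γ (e1 t) t)
    (hE1 : ∀ t, HasDerivAt e1 (κ1 t • e2 t + κ2 t • e3 t) t)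
    (hE2 : ∀ t, HasDerivAt e2 ((-(κ1 t)) • e1 t + κ3 t • e3 t) t)
    (hE3 : ∀ t, HasDerivAt e3 ((-(κ2 t)) • e1 t - κ3 t • e2 t) t)
    (hκ1 : Differentiable ℝ κ1) (hκ2 : ContDiff ℝ 2 κ2) (hκ3 : ContDiff ℝ 2 κ3)
    (hON : ∀ t, Orthonormal ℝ ![e1 t, e2 t, e3 t]) {Γ : ℝ → Fin 4 → ℝ}
    (hΓ : Γ = dualLift γ e3 fun _ => 0) (t : ℝ) (hor : e3 t = cross3 (e1 t) (e2 t)) :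
    det4 (Γ t) (deriv Γ t) (iteratedDeriv 2 Γ t) (iteratedDeriv 3 Γ t)
      = -((κ1 t)^2 * κ3 t * ((κ2 t)^2 + (κ3 t)^2)
          + κ2 t * ((κ2 t)^2 + (κ3 t)^2) * deriv κ1 t
          - 3 * κ1 t * (κ3 t)^2 * deriv κ2 t
          + 3 * κ1 t * κ2 t * κ3 t * deriv κ3 t
          + 2 * κ3 t * (deriv κ2 t)^2
          - 2 * κ2 t * deriv κ2 t * deriv κ3 t
          - κ2 t * κ3 t * iteratedDeriv 2 κ2 t
          + (κ2 t)^2 * iteratedDeriv 2 κ3 t) := by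
  subst hΓ
  obtain ⟨hn1, hn2, hn3⟩ := hasDerivAt_normal_inFrame hE1 hE2 hE3 hκ1 hκ2 hκ3
  have hd1 := deriv_dualLift hγ hn1 (fun t => hasDerivAt_const t 0) (s' := fun _ => 0)
    (fun t => by simpa using (hON t).2 (show (0 : Fin 3) ≠ 2 by decide))
  have hd2 := deriv_dualLift hγ hn2 (fun t => hasDerivAt_const t 0) (s' := κ2)
    (fun t => by simp [inner_inFrame (hON t)])
  have hd3 := deriv_dualLift hγ hn3
    (fun t => (hκ2.differentiable (by norm_num) t).hasDerivAt)
    (s' := fun t => 2 * deriv κ2 t - κ1 t * κ3 t)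
    (fun t => by rw [inner_inFrame (hON t)]; ring)
  have hΓt : dualLift γ e3 (fun _ => 0) t
      = dualLift γ (inFrame e1 e2 e3 (fun _ => 0) (fun _ => 0) (fun _ => 1)) (fun _ => 0) t := by
    simp [dualLift, inFrame]
  simp only [iteratedDeriv_succ, iteratedDeriv_zero, hd1, hd2, hd3, hΓt, dualLift_inFrame,
    det4_mulVec, det_frameMatrix, det3_eq_one_of_orthonormal (hON t) hor, one_mul]
  rw [det4, det_fin_four]
  simp only [of_apply, cons_val', cons_val_fin_one, cons_val_zero, cons_val_one, cons_val,
    Fin.isValue]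
  ring

end DarbouxFrame

theorem stmt15
    (γ e1 e2 e3 : ℝ → EuclideanSpace ℝ (Fin 3)) (κ1 κ2 κ3 : ℝ → ℝ)
    (hγ : ContDiff ℝ (⊤ : ℕ∞) γ)
    (he1s : ContDiff ℝ (⊤ : ℕ∞) e1) (he2s : ContDiff ℝ (⊤ : ℕ∞) e2)
    (he3s : ContDiff ℝ (⊤ : ℕ∞) e3)
    (hκ1s : ContDiff ℝ (⊤ : ℕ∞) κ1) (hκ2s : ContDiff ℝ (⊤ : ℕ∞) κ2)
    (hκ3s : ContDiff ℝ (⊤ : ℕ∞) κ3)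
    (he1 : e1 = deriv γ)
    (hON : ∀ t, Orthonormal ℝ ![e1 t, e2 t, e3 t])
    (hor : ∀ t, e3 t = cross3 (e1 t) (e2 t))
    (hE1 : ∀ t, deriv e1 t = κ1 t • e2 t + κ2 t • e3 t)
    (hE2 : ∀ t, deriv e2 t = (-(κ1 t)) • e1 t + κ3 t • e3 t)
    (hE3 : ∀ t, deriv e3 t = (-(κ2 t)) • e1 t - κ3 t • e2 t)
    (Γ : ℝ → (Fin 4 → ℝ))
    (hΓ : ∀ t, Γ t = ![e3 t 0, e3 t 1, e3 t 2, -⟪γ t, e3 t⟫]) :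
    ∀ t : ℝ,
      det4 (Γ t) (deriv Γ t) (iteratedDeriv 2 Γ t) (iteratedDeriv 3 Γ t)
        = -((κ1 t)^2 * κ3 t * ((κ2 t)^2 + (κ3 t)^2)
            + κ2 t * ((κ2 t)^2 + (κ3 t)^2) * deriv κ1 t
            - 3 * κ1 t * (κ3 t)^2 * deriv κ2 t
            + 3 * κ1 t * κ2 t * κ3 t * deriv κ3 t
            + 2 * κ3 t * (deriv κ2 t)^2
            - 2 * κ2 t * deriv κ2 t * deriv κ3 t
            - κ2 t * κ3 t * iteratedDeriv 2 κ2 t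
            + (κ2 t)^2 * iteratedDeriv 2 κ3 t)
      ∧ (det4 (Γ t) (deriv Γ t) (iteratedDeriv 2 Γ t) (iteratedDeriv 3 Γ t) = 0
          ↔ (κ1 t)^2 * κ3 t * ((κ2 t)^2 + (κ3 t)^2)
            + κ2 t * ((κ2 t)^2 + (κ3 t)^2) * deriv κ1 t
            - 3 * κ1 t * (κ3 t)^2 * deriv κ2 t
            + 3 * κ1 t * κ2 t * κ3 t * deriv κ3 t
            + 2 * κ3 t * (deriv κ2 t)^2
            - 2 * κ2 t * deriv κ2 t * deriv κ3 t
            - κ2 t * κ3 t * iteratedDeriv 2 κ2 t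
            + (κ2 t)^2 * iteratedDeriv 2 κ3 t = 0) := by
  have hasDerivAt_of_deriv {F : ℝ → E³} {F' : ℝ → E³} (hF : ContDiff ℝ (⊤ : ℕ∞) F)
      (h : ∀ t, deriv F t = F' t) (t : ℝ) : HasDerivAt F (F' t) t :=
    h t ▸ (hF.differentiable (by simp) t).hasDerivAt
  intro t
  have hdet := det4_iteratedDeriv_dualLift_normal
    (hasDerivAt_of_deriv (F' := e1) hγ fun t => by rw [he1]) (hasDerivAt_of_deriv he1s hE1)
    (hasDerivAt_of_deriv he2s hE2) (hasDerivAt_of_deriv he3s hE3)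
    (hκ1s.differentiable (by simp)) (hκ2s.of_le (WithTop.coe_le_coe.2 le_top))
    (hκ3s.of_le (WithTop.coe_le_coe.2 le_top)) hON
    (Γ := Γ) (funext fun t => by simp [hΓ, dualLift]) t (hor t)
  exact ⟨hdet, by rw [hdet, neg_eq_zero]⟩
end
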